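/- The maximal length of a rich square-free word over a 1-letter alphabet is 1, over a 2-letter alphabet is 3, and over a 3-letter alphabet is 7; i.e., r(1)=1, r(2)=3, r(3)=7. -/

import Mathlib

/-- A word is a palindrome if it equals its reversal. -/
def Palindromic {α : Type*} (w : List α) : Prop := w.reverse = w

/-- A finite word is rich if it has exactly |w|+1 distinct palindromic factors
(including the empty word). -/
def Rich {α : Type*} (w : List α) : Prop :=
  {p : List α | p <:+: w ∧ Palindromic p}.ncard = w.length + 1

/-- A word is square-free if it has no factor of the form `u ++ u` with `u` nonempty. -/
def SqFree {α : Type*} (w : List α) : Prop :=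
  ∀ u : List α, u ≠ [] → ¬ (u ++ u) <:+: w

/-- `rsf n` : the maximal length of a rich square-free word using exactly `n` distinct
letters (letters drawn from ℕ). -/
noncomputable def rsf (n : ℕ) : ℕ :=
  sSup {L | ∃ w : List ℕ, Rich w ∧ SqFree w ∧ w.toFinset.card = n ∧ w.length = L}

/-!
Appending a letter to a word creates at most one new palindromic factor, namely a palindromic
suffix: a shorter palindromic suffix of a longer one is also a prefix of it, so it already
occurs one position earlier. Hence every word has at most `|w| + 1` palindromic factors, and
prefixes of rich words are rich. Since square-freeness is also inherited by factors and both
properties are invariant under renaming letters injectively, a rich square-free word on `k`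
letters of length `> L` yields one of length `L + 1` over `{0, …, k - 1}`, built letter by letter
through rich square-free words. A finite search shows that there is none for
`(k, L) = (1, 1), (2, 3), (3, 7)`, while `0`, `010` and `0102010` are rich and square-free.
-/

open List

section Palindromes

variable {α : Type*}

def palFactors (w : List α) : Set (List α) := {p | p <:+: w ∧ Palindromic p}

theorem rich_iff_ncard_palFactors {w : List α} :
    Rich w ↔ (palFactors w).ncard = w.length + 1 := Iff.rfl

theorem Palindromic.prefix_of_suffix {p q : List α} (hp : Palindromic p) (hq : Palindromic q)
    (h : p <:+ q) : p <+: q := by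
  have := reverse_prefix.2 h
  rwa [hp, hq] at this

theorem palFactors_nil : palFactors ([] : List α) = {[]} := by
  ext p
  simp only [palFactors, infix_nil, Set.mem_ofPred_eq, Set.mem_singleton_iff, and_iff_left_iff_imp]
  rintro rfl
  rfl

theorem palFactors_subset_append_singleton (v : List α) (a : α) :
    palFactors v ⊆ palFactors (v ++ [a]) :=
  fun _ hp => ⟨hp.1.trans (prefix_append v [a]).isInfix, hp.2⟩

theorem suffix_of_mem_palFactors_append_singleton_diff {v p : List α} {a : α}
    (hp : p ∈ palFactors (v ++ [a]) \ palFactors v) : p <:+ v ++ [a] :=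
  (infix_concat_iff.1 hp.1.1).resolve_right fun h => hp.2 ⟨h, hp.1.2⟩

theorem palFactors_append_singleton_diff_subsingleton (v : List α) (a : α) :
    (palFactors (v ++ [a]) \ palFactors v).Subsingleton := by
  suffices key : ∀ p ∈ palFactors (v ++ [a]) \ palFactors v,
      ∀ q ∈ palFactors (v ++ [a]) \ palFactors v, p.length ≤ q.length → p = q by
    intro p hp q hq
    rcases le_total p.length q.length with h | h
    exacts [key p hp q hq h, (key q hq p hp h).symm]
  intro p hp q hq hlen
  have hps := suffix_of_mem_palFactors_append_singleton_diff hp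
  have hqs := suffix_of_mem_palFactors_append_singleton_diff hq
  have hpq : p <:+ q := (suffix_or_suffix_of_suffix hps hqs).elim id
    fun h => (h.eq_of_length_le hlen) ▸ suffix_refl _
  obtain ⟨t, rfl, ht⟩ : ∃ t, q = t ++ [a] ∧ t <:+ v := by
    refine (suffix_concat_iff.1 hqs).resolve_left ?_
    rintro rfl
    exact hq.2 ⟨nil_infix, rfl⟩
  refine (prefix_concat_iff.1 (hp.1.2.prefix_of_suffix hq.1.2 hpq)).resolve_right fun h => ?_
  exact hp.2 ⟨h.isInfix.trans ht.isInfix, hp.1.2⟩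

theorem ncard_palFactors_append_singleton_le (v : List α) (a : α) :
    (palFactors (v ++ [a])).ncard ≤ (palFactors v).ncard + 1 :=
  calc (palFactors (v ++ [a])).ncard
      = (palFactors v ∪ (palFactors (v ++ [a]) \ palFactors v)).ncard := by
        rw [Set.union_sdiff_cancel (palFactors_subset_append_singleton v a)]
    _ ≤ (palFactors v).ncard + (palFactors (v ++ [a]) \ palFactors v).ncard :=
        Set.ncard_union_le _ _
    _ ≤ (palFactors v).ncard + 1 := by
        have hss := palFactors_append_singleton_diff_subsingleton v a
        grw [(Set.ncard_le_one hss.finite).2 hss]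

theorem ncard_palFactors_le (w : List α) : (palFactors w).ncard ≤ w.length + 1 := by
  induction w using reverseRecOn with
  | nil => simp [palFactors_nil]
  | append_singleton v a ih =>
    grw [ncard_palFactors_append_singleton_le, ih, length_append, length_singleton]

theorem Rich.of_append_singleton {v : List α} {a : α} (h : Rich (v ++ [a])) : Rich v := by
  have := ncard_palFactors_append_singleton_le v a
  have := ncard_palFactors_le v
  rw [rich_iff_ncard_palFactors, length_append, length_singleton] at h
  rw [rich_iff_ncard_palFactors]
  omega

theorem Rich.take {w : List α} (hw : Rich w) (n : ℕ) : Rich (w.take n) := by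
  induction w using reverseRecOn with
  | nil => simpa using hw
  | append_singleton v a ih =>
    rcases le_or_gt n v.length with h | h
    · rw [take_append_of_le_length h]
      exact ih hw.of_append_singleton
    · rwa [take_of_length_le (by simp only [length_append, length_singleton]; omega)]

end Palindromes

theorem SqFree.of_infix {α : Type*} {v w : List α} (h : SqFree w) (hvw : v <:+: w) : SqFree v :=
  fun u hu huv => h u hu (huv.trans hvw)

def infixes {α : Type*} (w : List α) : List (List α) := w.tails.flatMap inits

theorem mem_infixes {α : Type*} {p w : List α} : p ∈ infixes w ↔ p <:+: w := by
  simp only [infixes, mem_flatMap, mem_tails, mem_inits, infix_iff_prefix_suffix]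
  tauto

section Decidable

variable {α : Type*} [DecidableEq α]

instance : DecidablePred (Palindromic : List α → Prop) :=
  fun w => inferInstanceAs (Decidable (w.reverse = w))

theorem palFactors_eq_toFinset (w : List α) :
    palFactors w = ((infixes w).filter (Palindromic ·)).toFinset := by
  ext p
  simp [palFactors, mem_infixes]

instance : DecidablePred (Rich : List α → Prop) := fun w =>
  decidable_of_iff (((infixes w).filter (Palindromic ·)).dedup.length = w.length + 1) <| by
    rw [rich_iff_ncard_palFactors, palFactors_eq_toFinset, Set.ncard_coe_finset, card_toFinset]

instance : DecidablePred (SqFree : List α → Prop) := fun w =>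
  decidable_of_iff (∀ u ∈ infixes w, u ≠ [] → ¬ (u ++ u) <:+: w) <| by
    refine ⟨fun h u hu huu => h u (mem_infixes.2 ?_) hu huu, fun h u _ => h u⟩
    exact (prefix_append u u).isInfix.trans huu

end Decidable

section Relabel

variable {α β : Type*} {f : α → β} {w : List α}

theorem Set.InjOn.list_map {s : Set α} (hf : Set.InjOn f s) :
    Set.InjOn (map f) {l | ∀ x ∈ l, x ∈ s} := by
  intro l₁ h₁ l₂ h₂ h
  induction l₁ generalizing l₂ with
  | nil => exact (map_eq_nil_iff.1 h.symm).symm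
  | cons a t ih =>
    obtain ⟨b, t', rfl, hab, htt'⟩ := map_eq_cons_iff.1 h.symm
    simp only [Set.mem_ofPred_eq, mem_cons, forall_eq_or_imp] at h₁ h₂
    rw [hf h₁.1 h₂.1 hab.symm, ih h₁.2 h₂.2 htt'.symm]

theorem injOn_map_infixes (hf : Set.InjOn f {x | x ∈ w}) :
    Set.InjOn (map f) {q | q <:+: w} := fun _ h₁ _ h₂ =>
  hf.list_map (fun _ hx => h₁.subset hx) (fun _ hx => h₂.subset hx)

theorem palindromic_map_iff (hf : Set.InjOn f {x | x ∈ w}) :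
    Palindromic (w.map f) ↔ Palindromic w := by
  rw [Palindromic, Palindromic, ← map_reverse]
  exact hf.list_map.eq_iff (fun _ hx => mem_reverse.1 hx) (fun _ hx => hx)

theorem palFactors_map (hf : Set.InjOn f {x | x ∈ w}) :
    palFactors (w.map f) = map f '' palFactors w := by
  ext p
  simp only [palFactors, infix_map_iff, Set.mem_image, Set.mem_ofPred_eq]
  constructor
  · rintro ⟨⟨q, hq, rfl⟩, hpal⟩
    exact ⟨q, ⟨hq, (palindromic_map_iff (hf.mono fun _ hx => hq.subset hx)).1 hpal⟩, rfl⟩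
  · rintro ⟨q, ⟨hq, hpal⟩, rfl⟩
    exact ⟨⟨q, hq, rfl⟩, (palindromic_map_iff (hf.mono fun _ hx => hq.subset hx)).2 hpal⟩

theorem Rich.map (hf : Set.InjOn f {x | x ∈ w}) (h : Rich w) : Rich (w.map f) := by
  rw [rich_iff_ncard_palFactors, palFactors_map hf, length_map,
    ((injOn_map_infixes hf).mono fun _ hq => hq.1).ncard_image]
  exact h

theorem SqFree.map (hf : Set.InjOn f {x | x ∈ w}) (h : SqFree w) : SqFree (w.map f) := by
  intro u hu huu
  obtain ⟨q, hq, hqu⟩ := infix_map_iff.1 huu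
  obtain ⟨q₁, q₂, rfl, h₁, h₂⟩ := map_eq_append_iff.1 hqu.symm
  have hq₁₂ : q₁ = q₂ := injOn_map_infixes hf (infix_append_left.trans hq)
    ((suffix_append q₁ q₂).isInfix.trans hq) (h₁.trans h₂.symm)
  subst hq₁₂
  exact h q₁ (by rintro rfl; exact hu h₁.symm) hq

theorem exists_injOn_forall_lt_card [DecidableEq α] (w : List α) :
    ∃ f : α → ℕ, Set.InjOn f {x | x ∈ w} ∧ ∀ x ∈ w, f x < w.toFinset.card := by
  refine ⟨fun x => w.dedup.idxOf x, fun x hx y _ hxy => ?_, fun x hx => ?_⟩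
  · exact (idxOf_inj (mem_dedup.2 hx)).1 hxy
  · rw [card_toFinset]
    exact idxOf_lt_length_iff.2 (mem_dedup.2 hx)

end Relabel

section Search

def prefixClosedWords (P : List ℕ → Prop) [DecidablePred P] (k : ℕ) : ℕ → List (List ℕ)
  | 0 => [[]]
  | n + 1 => ((prefixClosedWords P k n).flatMap fun w => (range k).map (w ++ [·])).filter (P ·)

theorem mem_prefixClosedWords {P : List ℕ → Prop} [DecidablePred P]
    (hP : ∀ w a, P (w ++ [a]) → P w) {k : ℕ} {w : List ℕ} (hw : P w) (hk : ∀ x ∈ w, x < k) :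
    w ∈ prefixClosedWords P k w.length := by
  induction w using reverseRecOn with
  | nil => simp [prefixClosedWords]
  | append_singleton v a ih =>
    simp only [length_append, length_singleton, prefixClosedWords, mem_filter, mem_flatMap,
      mem_map, mem_range, decide_eq_true_eq]
    simp only [mem_append, mem_singleton] at hk
    exact ⟨⟨v, ih (hP v a hw) fun x hx => hk x (.inl hx), a, hk a (.inr rfl), rfl⟩, hw⟩

theorem length_lt_of_prefixClosedWords_eq_nil {k m : ℕ}
    (hm : prefixClosedWords (fun w => Rich w ∧ SqFree w) k m = []) {w : List ℕ}
    (hr : Rich w) (hs : SqFree w) (hk : w.toFinset.card ≤ k) : w.length < m := by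
  by_contra! hlen
  obtain ⟨f, hf, hfk⟩ := exists_injOn_forall_lt_card w
  set v := (w.map f).take m
  have hv : v ∈ prefixClosedWords (fun w => Rich w ∧ SqFree w) k v.length := by
    refine mem_prefixClosedWords (fun u a h => ⟨h.1.of_append_singleton,
      h.2.of_infix (prefix_append u [a]).isInfix⟩) ⟨(hr.map hf).take m,
      (hs.map hf).of_infix (take_prefix m _).isInfix⟩ fun x hx => ?_
    obtain ⟨y, hy, rfl⟩ := mem_map.1 ((take_prefix m _).subset hx)
    exact (hfk y hy).trans_le hk
  rw [length_take, length_map, min_eq_left hlen, hm] at hv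
  exact not_mem_nil hv

end Search

theorem rsf_eq_of_prefixClosedWords_eq_nil {n L : ℕ} (w : List ℕ) (hr : Rich w) (hs : SqFree w)
    (hn : w.toFinset.card = n) (hL : w.length = L)
    (hsearch : prefixClosedWords (fun w => Rich w ∧ SqFree w) n (L + 1) = []) : rsf n = L := by
  refine IsGreatest.csSup_eq ⟨⟨w, hr, hs, hn, hL⟩, ?_⟩
  rintro _ ⟨v, hvr, hvs, hvn, rfl⟩
  exact Nat.lt_succ_iff.1 (length_lt_of_prefixClosedWords_eq_nil hsearch hvr hvs hvn.le)

theorem rsf_small_values : rsf 1 = 1 ∧ rsf 2 = 3 ∧ rsf 3 = 7 :=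
  ⟨rsf_eq_of_prefixClosedWords_eq_nil [0] (by decide) (by decide) rfl rfl (by decide),
    rsf_eq_of_prefixClosedWords_eq_nil [0, 1, 0] (by decide) (by decide) rfl rfl (by decide),
    rsf_eq_of_prefixClosedWords_eq_nil [0, 1, 0, 2, 0, 1, 0] (by decide) (by decide) rfl rfl
      (by decide)⟩
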